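/- arXiv:1611.04690 — 3 statements merged into one kernel-verified Lean document; each statement's English description precedes it below -/
import Mathlib

section
/- Let n ≥ 1, let F : ℝ^n → ℝ^n be continuously differentiable, and let K ⊆ ℝ^n be a compact set. Then ∫_{ℝ^n} N(y) dy = ∫_K |det DF_x| dx (as an identity of Lebesgue integrals of nonnegative functions, i.e. of lintegrals with values in [0,∞]), where N(y) denotes the number of points x ∈ K with F(x) = y, taken to be 0 when this set is infinite, and DF_x is the Fréchet derivative of F at x. -/
open MeasureTheory Set
open scoped ENNReal Topology
open Function

/-!
By the inverse function theorem `F` is locally injective near every point of `K` where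
`det DF ≠ 0`, so this regular part of `K` splits into countably many disjoint measurable pieces
on each of which `F` is injective. On such a piece the change of variables formula gives
`∫ |det DF| = vol (F '' piece)`, and summing over the pieces turns the right-hand side into the
integral of the number of regular preimages. By Sard's lemma the critical values form a null set,
and since the total integral is finite almost every fiber is finite, so almost everywhere the
number of regular preimages is `N(y)`.
-/

theorem HasStrictFDerivAt.exists_mem_nhds_injOn {𝕜 E F : Type*} [NontriviallyNormedField 𝕜]
    [NormedAddCommGroup E] [NormedSpace 𝕜 E] [NormedAddCommGroup F] [NormedSpace 𝕜 F]
    [CompleteSpace E] {f : E → F} {f' : E ≃L[𝕜] F} {a : E}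
    (hf : HasStrictFDerivAt f (f' : E →L[𝕜] F) a) : ∃ U ∈ 𝓝 a, InjOn f U :=
  ⟨_, hf.eventually_left_inverse, fun _ hx _ hy hxy => hx.symm.trans ((congrArg _ hxy).trans hy)⟩

theorem ContDiffAt.exists_mem_nhds_injOn_of_det_fderiv_ne_zero {𝕜 E : Type*} [RCLike 𝕜]
    [NormedAddCommGroup E] [NormedSpace 𝕜 E] [FiniteDimensional 𝕜 E] {f : E → E} {a : E}
    (hf : ContDiffAt 𝕜 1 f a) (ha : (fderiv 𝕜 f a).det ≠ 0) : ∃ U ∈ 𝓝 a, InjOn f U := by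
  have : CompleteSpace E := FiniteDimensional.complete 𝕜 E
  have hstrict := hf.hasStrictFDerivAt one_ne_zero
  rw [← ContinuousLinearMap.coe_toContinuousLinearEquivOfDetNeZero _ ha] at hstrict
  exact hstrict.exists_mem_nhds_injOn

theorem Set.sep_eq_diff_inter_preimage_singleton {α β : Type*} {f : α → β} {K Z : Set α}
    {y : β} (hy : y ∉ f '' Z) : {x ∈ K | f x = y} = (K \ Z) ∩ f ⁻¹' {y} := by
  ext x
  exact ⟨fun ⟨hxK, hxy⟩ => ⟨⟨hxK, fun hxZ => hy ⟨x, hxZ, hxy⟩⟩, hxy⟩,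
    fun ⟨⟨hxK, _⟩, hxy⟩ => ⟨hxK, hxy⟩⟩

theorem MeasureTheory.setLIntegral_diff_of_eqOn_zero {α : Type*} [MeasurableSpace α]
    {μ : Measure α} {g : α → ℝ≥0∞} {K Z : Set α} (hZ : MeasurableSet Z) (hg : EqOn g 0 Z) :
    ∫⁻ x in K \ Z, g x ∂μ = ∫⁻ x in K, g x ∂μ := by
  rw [sdiff_eq, inter_comm, ← Measure.restrict_restrict hZ.compl]
  exact setLIntegral_eq_of_support_subset fun x hx hxZ => hx (hg hxZ)

section Partition

variable {α β : Type*} [TopologicalSpace α] [SecondCountableTopology α] {f : α → β} {s : Set α}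

theorem exists_seq_isOpen_injOn_cover (h : ∀ x ∈ s, ∃ U ∈ 𝓝 x, InjOn f U) :
    ∃ V : ℕ → Set α, (∀ m, IsOpen (V m) ∧ InjOn f (V m)) ∧ s ⊆ ⋃ m, V m := by
  obtain ⟨T, hTc, hTS, hTU⟩ :=
    TopologicalSpace.isOpen_sUnion_countable {V | IsOpen V ∧ InjOn f V} fun _ hV => hV.1
  obtain ⟨V, hV⟩ := (hTc.insert ∅).exists_eq_range (insert_nonempty _ _)
  refine ⟨V, fun m => ?_, fun x hx => ?_⟩
  · rcases (hV ▸ mem_range_self m : V m ∈ insert ∅ T) with hempty | hmem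
    · rw [hempty]
      exact ⟨isOpen_empty, injOn_empty f⟩
    · exact hTS hmem
  · obtain ⟨U, hU, hinj⟩ := h x hx
    have hxT : x ∈ ⋃₀ T := hTU ▸ ⟨interior U, ⟨isOpen_interior, hinj.mono interior_subset⟩,
      mem_interior_iff_mem_nhds.2 hU⟩
    obtain ⟨W, hWT, hxW⟩ := hxT
    obtain ⟨m, rfl⟩ : W ∈ range V := hV ▸ mem_insert_of_mem _ hWT
    exact mem_iUnion.2 ⟨m, hxW⟩

theorem exists_measurable_partition_injOn [MeasurableSpace α] [OpensMeasurableSpace α]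
    (hs : MeasurableSet s) (h : ∀ x ∈ s, ∃ U ∈ 𝓝 x, InjOn f U) :
    ∃ t : ℕ → Set α, (∀ m, MeasurableSet (t m)) ∧ Pairwise (Disjoint on t) ∧
      (∀ m, InjOn f (t m)) ∧ ⋃ m, t m = s := by
  obtain ⟨V, hV, hsV⟩ := exists_seq_isOpen_injOn_cover h
  refine ⟨disjointed fun m => s ∩ V m, .disjointed fun m => hs.inter (hV m).1.measurableSet,
    disjoint_disjointed _,
    fun m => (hV m).2.mono ((disjointed_subset _ m).trans inter_subset_right), ?_⟩
  rw [iUnion_disjointed, ← inter_iUnion, inter_eq_self_of_subset_left hsV]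

end Partition

section Count

open Measure

variable {α β ι : Type*} [MeasurableSpace α] [MeasurableSingletonClass α] {f : α → β}

theorem count_eq_ncard_of_lt_top {s : Set α} (hs : count s < ∞) :
    count s = (s.ncard : ℝ≥0∞) := by
  have hfin := count_apply_lt_top.1 hs
  rw [count_apply_finite _ hfin, ncard_eq_toFinset_card _ hfin]

theorem Set.InjOn.count_inter_preimage_singleton {t : Set α} (hf : InjOn f t) (y : β) :
    count (t ∩ f ⁻¹' {y}) = (f '' t).indicator 1 y := by
  by_cases hy : y ∈ f '' t
  · obtain ⟨x, hx, rfl⟩ := hy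
    have hfiber : t ∩ f ⁻¹' {f x} = {x} :=
      Subset.antisymm (fun z hz => hf hz.1 hx hz.2) (singleton_subset_iff.2 ⟨hx, rfl⟩)
    rw [hfiber, count_singleton, indicator_of_mem (mem_image_of_mem f hx), Pi.one_apply]
  · have hfiber : t ∩ f ⁻¹' {y} = ∅ :=
      eq_empty_of_forall_notMem fun z hz => hy ⟨z, hz.1, hz.2⟩
    rw [hfiber, measure_empty, indicator_of_notMem hy]

theorem count_iUnion_inter_preimage_singleton [Countable ι] {t : ι → Set α}
    (hd : Pairwise (Disjoint on t)) (hinj : ∀ i, InjOn f (t i)) (y : β) :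
    count ((⋃ i, t i) ∩ f ⁻¹' {y}) = ∑' i, (f '' t i).indicator 1 y := by
  rw [iUnion_inter, measure_iUnion (fun i j hij => (hd hij).mono inter_subset_left
    inter_subset_left) fun i => Set.Subsingleton.measurableSet fun _ ha _ hb =>
      hinj i ha.1 hb.1 (ha.2.trans hb.2.symm)]
  exact tsum_congr fun i => (hinj i).count_inter_preimage_singleton y

end Count

section AreaFormula

open Measure

variable {E : Type*} [NormedAddCommGroup E] [NormedSpace ℝ E] [FiniteDimensional ℝ E]
  [MeasurableSpace E] [BorelSpace E] {s : Set E} {f : E → E} {f' : E → E →L[ℝ] E}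

theorem measurable_count_inter_preimage_singleton (hs : MeasurableSet s)
    (hf' : ∀ x ∈ s, HasFDerivWithinAt f (f' x) s x) (hloc : ∀ x ∈ s, ∃ U ∈ 𝓝 x, InjOn f U) :
    Measurable fun y => count (s ∩ f ⁻¹' {y}) := by
  obtain ⟨t, htm, htd, htinj, rfl⟩ := exists_measurable_partition_injOn hs hloc
  simp_rw [count_iUnion_inter_preimage_singleton htd htinj]
  exact .tsum fun m => measurable_const.indicator <| measurable_image_of_fderivWithin
    (htm m) (fun x hx => (hf' x (mem_iUnion_of_mem m hx)).mono (subset_iUnion t m)) (htinj m)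

theorem lintegral_count_inter_preimage_eq_lintegral_abs_det_fderiv (μ : Measure E)
    [μ.IsAddHaarMeasure] (hs : MeasurableSet s) (hf' : ∀ x ∈ s, HasFDerivWithinAt f (f' x) s x)
    (hloc : ∀ x ∈ s, ∃ U ∈ 𝓝 x, InjOn f U) :
    ∫⁻ y, count (s ∩ f ⁻¹' {y}) ∂μ = ∫⁻ x in s, ENNReal.ofReal |(f' x).det| ∂μ := by
  obtain ⟨t, htm, htd, htinj, rfl⟩ := exists_measurable_partition_injOn hs hloc
  have hf't : ∀ m, ∀ x ∈ t m, HasFDerivWithinAt f (f' x) (t m) x := fun m x hx =>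
    (hf' x (mem_iUnion_of_mem m hx)).mono (subset_iUnion t m)
  have himg : ∀ m, MeasurableSet (f '' t m) := fun m =>
    measurable_image_of_fderivWithin (htm m) (hf't m) (htinj m)
  calc ∫⁻ y, count ((⋃ m, t m) ∩ f ⁻¹' {y}) ∂μ
      = ∫⁻ y, ∑' m, (f '' t m).indicator 1 y ∂μ := by
        simp_rw [count_iUnion_inter_preimage_singleton htd htinj]
    _ = ∑' m, μ (f '' t m) := by
        refine (lintegral_tsum fun m => (measurable_const.indicator (himg m)).aemeasurable).trans ?_
        exact tsum_congr fun m => lintegral_indicator_one (himg m)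
    _ = ∑' m, ∫⁻ x in t m, ENNReal.ofReal |(f' x).det| ∂μ := tsum_congr fun m =>
        (lintegral_abs_det_fderiv_eq_addHaar_image μ (htm m) (hf't m) (htinj m)).symm
    _ = ∫⁻ x in ⋃ m, t m, ENNReal.ofReal |(f' x).det| ∂μ := (lintegral_iUnion htm htd _).symm

end AreaFormula

theorem coarea_same_dimension_general (n : ℕ)
    (F : EuclideanSpace ℝ (Fin n) → EuclideanSpace ℝ (Fin n)) (hF : ContDiff ℝ 1 F)
    (K : Set (EuclideanSpace ℝ (Fin n))) (hK : IsCompact K) :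
    ∫⁻ y, (({x ∈ K | F x = y}).ncard : ℝ≥0∞) ∂volume =
      ∫⁻ x in K, ENNReal.ofReal |(fderiv ℝ F x).det| ∂volume := by
  have hF' : ∀ x, HasFDerivAt F (fderiv ℝ F x) x := fun x =>
    (hF.differentiable one_ne_zero x).hasFDerivAt
  have hdet : Continuous fun x => (fderiv ℝ F x).det :=
    ContinuousLinearMap.continuous_det.comp (hF.continuous_fderiv one_ne_zero)
  set Z := {x | (fderiv ℝ F x).det = 0}
  have hZ : MeasurableSet Z := (isClosed_eq hdet continuous_const).measurableSet
  have hreg : MeasurableSet (K \ Z) := hK.measurableSet.diff hZ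
  have hregder : ∀ x ∈ K \ Z, HasFDerivWithinAt F (fderiv ℝ F x) (K \ Z) x := fun x _ =>
    (hF' x).hasFDerivWithinAt
  have hreginj : ∀ x ∈ K \ Z, ∃ U ∈ 𝓝 x, InjOn F U := fun x hx =>
    hF.contDiffAt.exists_mem_nhds_injOn_of_det_fderiv_ne_zero hx.2
  have harea :=
    lintegral_count_inter_preimage_eq_lintegral_abs_det_fderiv volume hreg hregder hreginj
  have hcrit : volume (F '' Z) = 0 := addHaar_image_eq_zero_of_det_fderivWithin_eq_zero _
    (fun x _ => (hF' x).hasFDerivWithinAt) fun _ hx => hx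
  have hKZ : ∫⁻ x in K \ Z, ENNReal.ofReal |(fderiv ℝ F x).det| =
      ∫⁻ x in K, ENNReal.ofReal |(fderiv ℝ F x).det| :=
    setLIntegral_diff_of_eqOn_zero hZ fun x hx => by simp [show (fderiv ℝ F x).det = 0 from hx]
  have hfin : ∀ᵐ y, Measure.count ((K \ Z) ∩ F ⁻¹' {y}) < ∞ := by
    refine ae_lt_top (measurable_count_inter_preimage_singleton hreg hregder hreginj) ?_
    rw [harea, hKZ]
    exact ((hdet.abs.continuousOn.integrableOn_compact hK).lintegral_lt_top).ne
  calc ∫⁻ y, (({x ∈ K | F x = y}).ncard : ℝ≥0∞)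
      = ∫⁻ y, Measure.count ((K \ Z) ∩ F ⁻¹' {y}) := by
        refine lintegral_congr_ae ?_
        filter_upwards [measure_eq_zero_iff_ae_notMem.1 hcrit, hfin] with y hyZ hyfin
        rw [count_eq_ncard_of_lt_top hyfin, sep_eq_diff_inter_preimage_singleton hyZ]
    _ = _ := harea.trans hKZ

/-- **Co-area formula for maps between spaces of the same dimension** (area formula): for a
continuously differentiable `F : ℝⁿ → ℝⁿ` and a compact set `K ⊆ ℝⁿ`, the Lebesgue integral over
`y ∈ ℝⁿ` of the number of points `x ∈ K` with `F x = y` (counted as `0` if infinite) equals the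
integral over `K` of the absolute value of the Jacobian determinant of `F`. -/
theorem coarea_same_dimension (n : ℕ) (hn : 1 ≤ n)
    (F : EuclideanSpace ℝ (Fin n) → EuclideanSpace ℝ (Fin n)) (hF : ContDiff ℝ 1 F)
    (K : Set (EuclideanSpace ℝ (Fin n))) (hK : IsCompact K) :
    ∫⁻ y, (({x ∈ K | F x = y}).ncard : ℝ≥0∞) ∂volume =
      ∫⁻ x in K, ENNReal.ofReal |(fderiv ℝ F x).det| ∂volume :=
  coarea_same_dimension_general n F hF K hK
end

section
/- Let n ≥ 2, let g be a linear isometry of ℝ^n (an element of the orthogonal group O(n)) and let a ∈ ℝ^n. Then for every nonnegative measurable function f defined on pairs (v,p) with v ∈ S^{n−1} and p ∈ v^⊥, one has ∫_{S^{n−1}} ∫_{v^⊥} f( g·v , g·p + a − ⟨a, g·v⟩·(g·v) ) dH^{n−1}(p) dσ(v) = ∫_{S^{n−1}} ∫_{v^⊥} f(v,p) dH^{n−1}(p) dσ(v). In other words, kinematic measure on the space of oriented lines is invariant under the action of every Euclidean motion x ↦ g·x + a. -/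
open MeasureTheory Metric Set Filter
open scoped ENNReal RealInnerProductSpace Topology

/-! Hausdorff measure is invariant under every isometry. The motion maps `v^⊥` isometrically onto
`(g v)^⊥`: it is `g` followed by the translation by the component of `a` orthogonal to `g v`, which
preserves that hyperplane. So the inner integral over `v^⊥` becomes the integral over `(g v)^⊥`,
and then `v ↦ g v` preserves the sphere. -/

theorem IsometryEquiv.setLIntegral_comp_preimage_hausdorffMeasure {X Y : Type*}
    [EMetricSpace X] [MeasurableSpace X] [BorelSpace X]
    [EMetricSpace Y] [MeasurableSpace Y] [BorelSpace Y]
    (φ : X ≃ᵢ Y) (d : ℝ) (h : Y → ℝ≥0∞) (s : Set Y) :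
    ∫⁻ x in φ ⁻¹' s, h (φ x) ∂μH[d] = ∫⁻ y in s, h y ∂μH[d] :=
  (φ.measurePreserving_hausdorffMeasure d).setLIntegral_comp_preimage_emb
    φ.toHomeomorph.measurableEmbedding h s

section InnerProductSpace

variable {E : Type*} [NormedAddCommGroup E] [InnerProductSpace ℝ E]

theorem inner_add_sub_inner_smul_self {u : E} (hu : ‖u‖ = 1) (p a : E) :
    ⟪p + a - ⟪a, u⟫ • u, u⟫ = ⟪p, u⟫ := by
  rw [inner_sub_left, inner_add_left, real_inner_smul_left, real_inner_self_eq_norm_sq, hu]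
  ring

theorem LinearIsometryEquiv.preimage_orthogonal_motion (g : E ≃ₗᵢ[ℝ] E) {v : E} (hv : ‖v‖ = 1)
    (a : E) :
    (fun p ↦ g p + a - ⟪a, g v⟫ • g v) ⁻¹' {q | ⟪q, g v⟫ = 0} = {p | ⟪p, v⟫ = 0} := by
  ext p
  simp only [mem_preimage, mem_ofPred_eq,
    inner_add_sub_inner_smul_self ((g.norm_map v).trans hv), g.inner_map_map]

variable [MeasurableSpace E] [BorelSpace E]

theorem LinearIsometryEquiv.setLIntegral_orthogonal_motion (g : E ≃ₗᵢ[ℝ] E) {v : E}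
    (hv : ‖v‖ = 1) (a : E) (d : ℝ) (h : E → ℝ≥0∞) :
    ∫⁻ p in {p | ⟪p, v⟫ = 0}, h (g p + a - ⟪a, g v⟫ • g v) ∂μH[d] =
      ∫⁻ q in {q | ⟪q, g v⟫ = 0}, h q ∂μH[d] := by
  let φ : E ≃ᵢ E := g.toIsometryEquiv.trans (IsometryEquiv.addRight (a - ⟪a, g v⟫ • g v))
  have hφ : ⇑φ = fun p ↦ g p + a - ⟪a, g v⟫ • g v := funext fun p ↦ add_sub_assoc _ _ _ |>.symm
  rw [← g.preimage_orthogonal_motion hv a]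
  simpa only [hφ] using φ.setLIntegral_comp_preimage_hausdorffMeasure d h {q | ⟪q, g v⟫ = 0}

theorem LinearIsometryEquiv.setLIntegral_sphere_comp (g : E ≃ₗᵢ[ℝ] E) (d : ℝ)
    (h : E → ℝ≥0∞) :
    ∫⁻ v in sphere 0 1, h (g v) ∂μH[d] = ∫⁻ v in sphere 0 1, h v ∂μH[d] := by
  conv_lhs => rw [← map_zero g.symm, ← g.preimage_sphere]
  exact g.toIsometryEquiv.setLIntegral_comp_preimage_hausdorffMeasure d h _

end InnerProductSpace

theorem kinematic_measure_invariant_general (n : ℕ)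
    (g : EuclideanSpace ℝ (Fin n) ≃ₗᵢ[ℝ] EuclideanSpace ℝ (Fin n))
    (a : EuclideanSpace ℝ (Fin n))
    (f : EuclideanSpace ℝ (Fin n) × EuclideanSpace ℝ (Fin n) → ℝ≥0∞) :
    (∫⁻ v in sphere (0 : EuclideanSpace ℝ (Fin n)) 1,
        ∫⁻ p in {p : EuclideanSpace ℝ (Fin n) | ⟪p, v⟫ = 0},
          f (g v, g p + a - ⟪a, g v⟫ • (g v)) ∂(μH[(n : ℝ) - 1]) ∂(μH[(n : ℝ) - 1])) =
      ∫⁻ v in sphere (0 : EuclideanSpace ℝ (Fin n)) 1,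
        ∫⁻ p in {p : EuclideanSpace ℝ (Fin n) | ⟪p, v⟫ = 0},
          f (v, p) ∂(μH[(n : ℝ) - 1]) ∂(μH[(n : ℝ) - 1]) := by
  calc _ = ∫⁻ v in sphere 0 1,
          ∫⁻ p in {p | ⟪p, g v⟫ = 0}, f (g v, p) ∂μH[(n : ℝ) - 1] ∂μH[(n : ℝ) - 1] :=
        setLIntegral_congr_fun isClosed_sphere.measurableSet fun v hv ↦
          g.setLIntegral_orthogonal_motion (mem_sphere_zero_iff_norm.mp hv) a _ _
    _ = _ := g.setLIntegral_sphere_comp _ fun u ↦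
          ∫⁻ p in {p | ⟪p, u⟫ = 0}, f (u, p) ∂μH[(n : ℝ) - 1]

/-- **Invariance of kinematic measure under Euclidean motions.** Let `g` be a linear isometry of
`ℝⁿ` and `a ∈ ℝⁿ`. The Euclidean motion `x ↦ g x + a` sends the oriented line `(v,p)` (with `v` in
the unit sphere and `p ∈ v^⊥`) to the line `(g v, g p + a - ⟨a, g v⟩ (g v))`. For every
nonnegative measurable function `f` of lines, the kinematic integral of `f` composed with this
action equals the kinematic integral of `f`. -/
theorem kinematic_measure_invariant (n : ℕ) (hn : 2 ≤ n)
    (g : EuclideanSpace ℝ (Fin n) ≃ₗᵢ[ℝ] EuclideanSpace ℝ (Fin n))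
    (a : EuclideanSpace ℝ (Fin n))
    (f : EuclideanSpace ℝ (Fin n) × EuclideanSpace ℝ (Fin n) → ℝ≥0∞) (hf : Measurable f) :
    (∫⁻ v in sphere (0 : EuclideanSpace ℝ (Fin n)) 1,
        ∫⁻ p in {p : EuclideanSpace ℝ (Fin n) | ⟪p, v⟫ = 0},
          f (g v, g p + a - ⟪a, g v⟫ • (g v)) ∂(μH[(n : ℝ) - 1]) ∂(μH[(n : ℝ) - 1])) =
      ∫⁻ v in sphere (0 : EuclideanSpace ℝ (Fin n)) 1,
        ∫⁻ p in {p : EuclideanSpace ℝ (Fin n) | ⟪p, v⟫ = 0},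
          f (v, p) ∂(μH[(n : ℝ) - 1]) ∂(μH[(n : ℝ) - 1]) :=
  kinematic_measure_invariant_general n g a f
end

section
/- Let X be a metric space, μ a finite Borel measure on X with μ(X) > 0, and {x_i} a sequence in X such that for every Borel set E ⊆ X whose topological boundary satisfies μ(∂E) = 0, one has lim_{N→∞} (1/N)·#{i ≤ N : x_i ∈ E} = μ(E)/μ(X). Let Y ⊆ X be a Borel set with μ(Y) > 0 and μ(∂Y) = 0. Then infinitely many x_i lie in Y, and the subsequence {y_j} consisting of those x_i that lie in Y (taken in order) satisfies: for every Borel set E ⊆ Y with μ(∂E) = 0 (boundary taken in X), lim_{N→∞} (1/N)·#{j ≤ N : y_j ∈ E} = μ(E)/μ(Y). -/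
open MeasureTheory Set Filter
open scoped ENNReal Topology Classical

/-- **Equidistribution passes to subsets (the Method of Rejection).** Let `μ` be a nontrivial
finite Borel measure on a metric space `X` and let `{xᵢ}` be a sequence which is
1-equidistributed with respect to `μ`, in the sense that for every Borel set `E` whose topological
boundary is `μ`-null, the proportion of the first `N` terms lying in `E` tends to `μ(E)/μ(X)`.
Let `Y` be a Borel set with `μ(Y) > 0` and `μ(∂Y) = 0`. Then infinitely many `xᵢ` lie in `Y`, and
the subsequence of those terms lying in `Y` (taken in order, enumerated by `Nat.nth`) is
1-equidistributed in `Y` with respect to `μ` restricted to `Y`: for every Borel `E ⊆ Y` with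
`μ(∂E) = 0`, the proportion of its first `N` terms lying in `E` tends to `μ(E)/μ(Y)`. -/
theorem equidistributed_rejection {X : Type*} [MetricSpace X] [MeasurableSpace X] [BorelSpace X]
    (μ : Measure X) [IsFiniteMeasure μ] (hX : μ Set.univ ≠ 0)
    (x : ℕ → X)
    (hx : ∀ E : Set X, MeasurableSet E → μ (frontier E) = 0 →
      Tendsto (fun N : ℕ => (((Finset.range N).filter (fun i => x i ∈ E)).card : ℝ) / N)
        atTop (𝓝 ((μ E).toReal / (μ Set.univ).toReal)))
    (Y : Set X) (hYm : MeasurableSet Y) (hY0 : μ Y ≠ 0) (hYb : μ (frontier Y) = 0) :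
    {i : ℕ | x i ∈ Y}.Infinite ∧
      ∀ E : Set X, E ⊆ Y → MeasurableSet E → μ (frontier E) = 0 →
        Tendsto (fun N : ℕ => (((Finset.range N).filter
            (fun j => x (Nat.nth (fun i => x i ∈ Y) j) ∈ E)).card : ℝ) / N)
          atTop (𝓝 ((μ E).toReal / (μ Y).toReal)) := by
  set p : ℕ → Prop := fun i => x i ∈ Y with hp_def
  have hYtop : μ Y ≠ ⊤ := measure_ne_top μ Y
  have hXtop : μ Set.univ ≠ ⊤ := measure_ne_top μ _
  have hYpos : 0 < (μ Y).toReal := ENNReal.toReal_pos hY0 hYtop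
  have hXpos : 0 < (μ Set.univ).toReal := ENNReal.toReal_pos hX hXtop
  have hxY := hx Y hYm hYb
  -- infinitude
  have hp : (setOf p).Infinite := by
    by_contra hfin
    rw [Set.not_infinite] at hfin
    have hbound : ∀ N : ℕ,
        (((Finset.range N).filter (fun i => x i ∈ Y)).card : ℝ) / N
          ≤ (hfin.toFinset.card : ℝ) / N := by
      intro N
      rcases Nat.eq_zero_or_pos N with h0 | h0
      · simp [h0]
      · have : (((Finset.range N).filter (fun i => x i ∈ Y)).card : ℝ)
            ≤ (hfin.toFinset.card : ℝ) := by
          exact_mod_cast Finset.card_le_card (fun i hi => by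
            simp only [Finset.mem_filter] at hi
            exact hfin.mem_toFinset.2 hi.2)
        gcongr
    have h0 : Tendsto (fun N : ℕ => (((Finset.range N).filter (fun i => x i ∈ Y)).card : ℝ) / N)
        atTop (𝓝 0) := by
      refine squeeze_zero (fun N => by positivity) hbound ?_
      exact Tendsto.div_atTop tendsto_const_nhds tendsto_natCast_atTop_atTop
    have := tendsto_nhds_unique hxY h0
    have : (μ Y).toReal / (μ Set.univ).toReal > 0 := div_pos hYpos hXpos
    linarith [tendsto_nhds_unique hxY h0]
  refine ⟨hp, fun E hEY hEm hEb => ?_⟩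
  have hxE := hx E hEm hEb
  -- key counting identity
  have hcard : ∀ N : ℕ,
      ((Finset.range N).filter (fun j => x (Nat.nth p j) ∈ E)).card
        = ((Finset.range (Nat.nth p N)).filter (fun i => x i ∈ E)).card := by
    intro N
    refine Finset.card_bij (fun j _ => Nat.nth p j) ?_ ?_ ?_
    · intro j hj
      simp only [Finset.mem_filter, Finset.mem_range] at hj ⊢
      exact ⟨(Nat.nth_lt_nth hp).2 hj.1, hj.2⟩
    · intro a ha b hb hab
      exact (Nat.nth_injective hp) hab
    · intro i hi
      simp only [Finset.mem_filter, Finset.mem_range] at hi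
      have hpi : p i := hEY hi.2
      refine ⟨Nat.count p i, ?_, Nat.nth_count hpi⟩
      simp only [Finset.mem_filter, Finset.mem_range]
      constructor
      · rw [← Nat.nth_lt_nth hp, Nat.nth_count hpi]; exact hi.1
      · rw [Nat.nth_count hpi]; exact hi.2
  have hcardY : ∀ N : ℕ,
      ((Finset.range (Nat.nth p N)).filter (fun i => x i ∈ Y)).card = N := by
    intro N
    rw [← Nat.count_eq_card_filter_range]
    exact Nat.count_nth_of_infinite hp N
  have hM : Tendsto (fun N : ℕ => Nat.nth p N) atTop atTop :=
    (Nat.nth_strictMono hp).tendsto_atTop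
  have hb : (μ Y).toReal / (μ Set.univ).toReal ≠ 0 :=
    ne_of_gt (div_pos hYpos hXpos)
  have hcomp : Tendsto (fun N : ℕ =>
      ((((Finset.range (Nat.nth p N)).filter (fun i => x i ∈ E)).card : ℝ) / (Nat.nth p N))
        / ((((Finset.range (Nat.nth p N)).filter (fun i => x i ∈ Y)).card : ℝ) / (Nat.nth p N)))
      atTop (𝓝 (((μ E).toReal / (μ Set.univ).toReal) / ((μ Y).toReal / (μ Set.univ).toReal))) :=
    ((hxE.div hxY hb).comp hM)
  have hlim_eq : ((μ E).toReal / (μ Set.univ).toReal) / ((μ Y).toReal / (μ Set.univ).toReal)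
      = (μ E).toReal / (μ Y).toReal := by
    field_simp
  rw [hlim_eq] at hcomp
  refine hcomp.congr' ?_
  filter_upwards [eventually_ge_atTop 1] with N hN
  have hMpos : 0 < Nat.nth p N := lt_of_lt_of_le hN ((Nat.nth_strictMono hp).le_apply)
  have hM0 : ((Nat.nth p N : ℕ) : ℝ) ≠ 0 := by exact_mod_cast hMpos.ne'
  have hN0 : (N : ℝ) ≠ 0 := by exact_mod_cast (lt_of_lt_of_le one_pos hN).ne'
  rw [hcard N, hcardY N]
  field_simp
end
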